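/- arXiv:2407.14444 — 2 statements merged into one kernel-verified Lean document; each statement's English description precedes it below -/
import Mathlib

section
/- Let ω ∈ ℂ with Re ω ≠ 0. If f : ℝ → ℂ is almost periodic, then G_ω[f] is almost periodic. -/
open MeasureTheory Filter Topology
open scoped ENNReal NNReal

noncomputable section

/-- Bochner-almost periodic function `ℝ → ℂ`. -/
def AP (f : ℝ → ℂ) : Prop :=
  Continuous f ∧ ∀ b : ℕ → ℝ, ∃ φ : ℕ → ℕ, StrictMono φ ∧ ∃ g : ℝ → ℂ,
    TendstoUniformly (fun m t => f (t + b (φ m))) g atTop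

/-- Bounded continuous. -/
def BCb (f : ℝ → ℂ) : Prop := Continuous f ∧ ∃ C : ℝ, ∀ t, ‖f t‖ ≤ C

def BC0 (f : ℝ → ℂ) : Prop := BCb f ∧ Tendsto f atTop (nhds 0)

def C00 (f : ℝ → ℂ) : Prop := BC0 f ∧ Tendsto f atBot (nhds 0)

def Lp0 (p : ℝ) (f : ℝ → ℂ) : Prop :=
  (∃ C : ℝ, ∀ t ≤ (0:ℝ), ‖f t‖ ≤ C) ∧ (∫⁻ t in Set.Ioi (0:ℝ), (‖f t‖₊ : ℝ≥0∞) ^ p) < ⊤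

def LpR (p : ℝ) (f : ℝ → ℂ) : Prop := (∫⁻ t : ℝ, (‖f t‖₊ : ℝ≥0∞) ^ p) < ⊤

def AAP (f : ℝ → ℂ) : Prop :=
  BCb f ∧ ∃ φ g : ℝ → ℂ, (∀ t, f t = φ t + g t) ∧ AP φ ∧ Tendsto g atTop (nhds 0)

def AAP0 (f : ℝ → ℂ) : Prop :=
  BCb f ∧ ∃ φ g : ℝ → ℂ, (∀ t, f t = φ t + g t) ∧ AP φ ∧
    Tendsto g atTop (nhds 0) ∧ Tendsto g atBot (nhds 0)

def APp (p : ℝ) (f : ℝ → ℂ) : Prop :=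
  BCb f ∧ ∃ φ g : ℝ → ℂ, (∀ t, f t = φ t + g t) ∧ AP φ ∧ Lp0 p g

def APp0 (p : ℝ) (f : ℝ → ℂ) : Prop :=
  BCb f ∧ ∃ φ g : ℝ → ℂ, (∀ t, f t = φ t + g t) ∧ AP φ ∧ LpR p g

/-- The Green kernel `g_ω`. -/
def gker (ω : ℂ) (t s : ℝ) : ℂ :=
  if Real.sign ω.re * (t - s) < 0
  then ((-Real.sign ω.re : ℝ) : ℂ) * Complex.exp (ω * ((t - s : ℝ) : ℂ)) else 0

/-- The Green operator `G_ω`. -/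
def Gop (ω : ℂ) (f : ℝ → ℂ) (t : ℝ) : ℂ := ∫ s : ℝ, gker ω t s * f s

/-- The absolute Green operator `I_ω`, with values in `[0,∞]`. -/
def Iop (ω : ℂ) (f : ℝ → ℂ) (t : ℝ) : ℝ≥0∞ := ∫⁻ s : ℝ, (‖gker ω t s * f s‖₊ : ℝ≥0∞)

def Gam {m : ℕ} (γ : Fin m → ℂ) (j : Fin m) : ℂ := ∏ k ∈ Finset.univ.erase j, (γ j - γ k)

/-- The Green operator for the family γ. -/
def GreenOp {m : ℕ} (γ : Fin m → ℂ) (f : ℝ → ℂ) (t : ℝ) : ℂ :=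
  ∑ j, (Gam γ j)⁻¹ * Gop (γ j) f t

def Dpoly {m : ℕ} (γ : Fin m → ℂ) : Polynomial ℂ := ∏ j, (Polynomial.X - Polynomial.C (γ j))

/-- The differential operator with characteristic polynomial `∏ (x - γ j)`. -/
def Dop {m : ℕ} (γ : Fin m → ℂ) (z : ℝ → ℂ) (t : ℝ) : ℂ :=
  ∑ k ∈ Finset.range (m + 1), (Dpoly γ).coeff k * iteratedDeriv k z t

def APm (m : ℕ) (F : ℝ → (Fin m → ℂ) → ℂ) : Prop :=
  Continuous (fun p : ℝ × (Fin m → ℂ) => F p.1 p.2) ∧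
  ∀ b : ℕ → ℝ, ∃ φ : ℕ → ℕ, StrictMono φ ∧ ∃ G : ℝ → (Fin m → ℂ) → ℂ,
    ∀ K : Set (Fin m → ℂ), IsCompact K →
      TendstoUniformlyOn (fun k (p : ℝ × (Fin m → ℂ)) => F (p.1 + b (φ k)) p.2)
        (fun p => G p.1 p.2) atTop (Set.univ ×ˢ K)

def DecayTop (m : ℕ) (h : ℝ → (Fin m → ℂ) → ℂ) : Prop :=
  ∀ K : Set (Fin m → ℂ), IsCompact K →
    TendstoUniformlyOn (fun t x => h t x) 0 atTop K

def DecayBot (m : ℕ) (h : ℝ → (Fin m → ℂ) → ℂ) : Prop :=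
  ∀ K : Set (Fin m → ℂ), IsCompact K →
    TendstoUniformlyOn (fun t x => h t x) 0 atBot K

def AAPm (m : ℕ) (F : ℝ → (Fin m → ℂ) → ℂ) : Prop :=
  Continuous (fun p : ℝ × (Fin m → ℂ) => F p.1 p.2) ∧ (∃ C : ℝ, ∀ t x, ‖F t x‖ ≤ C) ∧
  ∃ Φ h : ℝ → (Fin m → ℂ) → ℂ, (∀ t x, F t x = Φ t x + h t x) ∧ APm m Φ ∧ DecayTop m h

def AAP0m (m : ℕ) (F : ℝ → (Fin m → ℂ) → ℂ) : Prop :=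
  Continuous (fun p : ℝ × (Fin m → ℂ) => F p.1 p.2) ∧ (∃ C : ℝ, ∀ t x, ‖F t x‖ ≤ C) ∧
  ∃ Φ h : ℝ → (Fin m → ℂ) → ℂ, (∀ t x, F t x = Φ t x + h t x) ∧ APm m Φ ∧
    DecayTop m h ∧ DecayBot m h

/-- Complete Bell polynomials. -/
def Bell : ℕ → (ℕ → ℂ) → ℂ
  | 0, _ => 1
  | (i+1), x => ∑ j ∈ Finset.range (i+1), (Nat.choose i j : ℂ) * Bell (i - j) x * x (j+1)
decreasing_by exact Nat.lt_succ_of_le (Nat.sub_le i j)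

/-- `f_i(x_1,…,x_i) = B_{i+1}(x_1,…,x_i,0)`. -/
def fBell (i : ℕ) (x : ℕ → ℂ) : ℂ := Bell (i+1) (fun k => if k = i+1 then 0 else x k)

def Pa (n : ℕ) (a : ℕ → ℂ) : Polynomial ℂ :=
  Polynomial.X ^ n + ∑ i ∈ Finset.range n, Polynomial.C (a i) * Polynomial.X ^ i

def Prl (n : ℕ) (r : ℕ → ℝ → ℂ) (lam : ℂ) (t : ℝ) : ℂ :=
  ∑ k ∈ Finset.range n, lam ^ k * r k t

/-- `(d^k/dλ^k) P(r(t);λ)`. -/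
def PrlD (n k : ℕ) (r : ℕ → ℝ → ℂ) (lam : ℂ) (t : ℝ) : ℂ :=
  (Nat.factorial k : ℂ) * ∑ i ∈ Finset.range n, (Nat.choose i k : ℂ) * lam ^ (i - k) * r i t

def DopP (n : ℕ) (a : ℕ → ℂ) (lam : ℂ) (z : ℝ → ℂ) (t : ℝ) : ℂ :=
  ∑ j ∈ Finset.Icc 1 n, ((Nat.factorial j : ℂ))⁻¹ *
    Polynomial.eval lam (Polynomial.derivative^[j] (Pa n a)) * iteratedDeriv (j-1) z t

def Lterm (n : ℕ) (r : ℕ → ℝ → ℂ) (lam : ℂ) (z : ℝ → ℂ) (t : ℝ) : ℂ :=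
  ∑ k ∈ Finset.Icc 1 (n-1), ((Nat.factorial k : ℂ))⁻¹ * PrlD n k r lam t * iteratedDeriv (k-1) z t

def Fterm (n : ℕ) (a : ℕ → ℂ) (r : ℕ → ℝ → ℂ) (lam : ℂ) (z : ℝ → ℂ) (t : ℝ) : ℂ :=
  ∑ i ∈ Finset.Icc 2 n, ∑ j ∈ Finset.range (n - i + 1),
    (Nat.choose (i+j) j : ℂ) * (a (i+j) + r (i+j) t) * lam ^ j *
      fBell (i-1) (fun k => iteratedDeriv (k-1) z t)

def aT (n : ℕ) {m : ℕ} (γ : Fin m → ℂ) (j : Fin m) : ℝ :=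
  ∑ i ∈ Finset.range (n-1), ‖γ j‖ ^ i

def Lconst (n : ℕ) (γ : Fin (n-1) → ℂ) (r : ℕ → ℝ → ℂ) (lam : ℂ) (β : ℝ) : ℝ≥0∞ :=
  ∑ j, ∑ k ∈ Finset.Icc 1 (n-1),
    ENNReal.ofReal (aT n γ j / (‖Gam γ j‖ * (Nat.factorial k))) *
      ⨆ t : ℝ, Iop (((γ j).re - Real.sign (γ j).re * β : ℝ) : ℂ) (PrlD n k r lam) t

def Qconst (n : ℕ) (γ : Fin (n-1) → ℂ) (a : ℕ → ℂ) (r : ℕ → ℝ → ℂ) (lam : ℂ) (β : ℝ) : ℝ≥0∞ :=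
  ∑ j, ∑ i ∈ Finset.Icc 2 n, ∑ k ∈ Finset.range (i-1),
    ENNReal.ofReal (aT n γ j / ‖Gam γ j‖ * (Nat.choose i k) * ‖lam‖ ^ k) *
      (ENNReal.ofReal (‖a i‖ / |(γ j).re - Real.sign (γ j).re * β|) +
        ⨆ t : ℝ, Iop (((γ j).re - Real.sign (γ j).re * β : ℝ) : ℂ) (r i) t)

def mConst (n : ℕ) (δ : ℝ) : ℝ :=
  sSup { q : ℝ | ∃ i ∈ Finset.Icc 1 (n-1), ∃ X Y : ℕ → ℂ,
    (∑ k ∈ Finset.Icc 1 i, ‖X k‖) ≤ δ ∧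
    (∑ k ∈ Finset.Icc 1 i, ‖Y k‖) ≤ δ ∧
    (∑ k ∈ Finset.Icc 1 i, ‖X k - Y k‖) ≠ 0 ∧
    q = ‖fBell i X - fBell i Y‖ / ∑ k ∈ Finset.Icc 1 i, ‖X k - Y k‖ }

/-!
`G_ω f` is the convolution of `f` with the kernel `u ↦ g_ω(u, 0)`, which is dominated by
`e^{-|Re ω| |u|}` and hence integrable. Convolution with an integrable kernel `k` commutes with
translations and is Lipschitz for the sup norm with constant `‖k‖₁`, so it carries a uniformly
convergent sequence of translates of `f` to a uniformly convergent sequence of translates of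
`k ⋆ f`. Continuity of `k ⋆ f` holds because an almost periodic `f` is bounded: translates along
a sequence `b_n` with `|f(b_n)| → ∞` could have no convergent subsequence.
-/

open scoped Convolution
open ContinuousLinearMap (mul)

section Convolution

variable {k : ℝ → ℂ}

theorem convolution_mul_apply_add (u : ℝ → ℂ) (t b : ℝ) :
    (k ⋆[mul ℂ ℂ] u) (t + b) = (k ⋆[mul ℂ ℂ] fun s => u (s + b)) t := by
  simp only [convolution_mul_swap]
  rw [← integral_add_right_eq_self _ b]
  simp only [add_sub_add_right_eq_sub]

theorem norm_convolution_mul_le (hk : Integrable k) {u : ℝ → ℂ} {C : ℝ} (hC : ∀ s, ‖u s‖ ≤ C)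
    (t : ℝ) : ‖(k ⋆[mul ℂ ℂ] u) t‖ ≤ (∫ x, ‖k x‖) * C := by
  rw [convolution_mul_swap, ← integral_sub_left_eq_self (fun x => ‖k x‖) volume t,
    ← integral_mul_const]
  refine norm_integral_le_of_norm_le ((hk.norm.comp_sub_left t).mul_const C)
    (Eventually.of_forall fun s => ?_)
  rw [norm_mul]
  exact mul_le_mul_of_nonneg_left (hC s) (norm_nonneg _)

theorem convolution_mul_sub (hk : Integrable k) {u v : ℝ → ℂ} {C : ℝ}
    (hu : AEStronglyMeasurable u) (hv : AEStronglyMeasurable v)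
    (huC : ∀ s, ‖u s‖ ≤ C) (hvC : ∀ s, ‖v s‖ ≤ C) :
    (k ⋆[mul ℂ ℂ] u) - (k ⋆[mul ℂ ℂ] v) = k ⋆[mul ℂ ℂ] (u - v) := by
  ext t
  have hint : ∀ w : ℝ → ℂ, AEStronglyMeasurable w → (∀ s, ‖w s‖ ≤ C) →
      Integrable fun s => k (t - s) * w s := fun w hw hwC =>
    (hk.comp_sub_left t).mul_bdd hw (Eventually.of_forall hwC)
  simp only [Pi.sub_apply, convolution_mul_swap, mul_sub]
  exact (integral_sub (hint u hu huC) (hint v hv hvC)).symm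

theorem TendstoUniformly.convolution_mul_left {ι : Type*} {l : Filter ι} [l.NeBot]
    [l.IsCountablyGenerated] (hk : Integrable k) {F : ι → ℝ → ℂ} {g : ℝ → ℂ} {C : ℝ}
    (hF : ∀ i, AEStronglyMeasurable (F i)) (hFC : ∀ i s, ‖F i s‖ ≤ C)
    (h : TendstoUniformly F g l) :
    TendstoUniformly (fun i => k ⋆[ContinuousLinearMap.mul ℂ ℂ] F i)
      (k ⋆[ContinuousLinearMap.mul ℂ ℂ] g) l := by
  have hg : AEStronglyMeasurable g :=
    aestronglyMeasurable_of_tendsto_ae l hF (Eventually.of_forall h.tendsto_at)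
  have hgC : ∀ s, ‖g s‖ ≤ C := fun s =>
    le_of_tendsto (h.tendsto_at s).norm (Eventually.of_forall fun i => hFC i s)
  set K := ∫ x, ‖k x‖
  rw [Metric.tendstoUniformly_iff]
  intro ε hε
  have hδ : 0 < ε / (K + 1) := by positivity
  filter_upwards [Metric.tendstoUniformly_iff.mp h _ hδ] with i hi t
  rw [dist_eq_norm, ← Pi.sub_apply, convolution_mul_sub hk hg (hF i) hgC (hFC i)]
  calc ‖(k ⋆[ContinuousLinearMap.mul ℂ ℂ] (g - F i)) t‖ ≤ K * (ε / (K + 1)) :=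
        norm_convolution_mul_le hk (fun s => by simpa [dist_eq_norm] using (hi s).le) t
    _ < ε := by
        rw [mul_div_assoc', div_lt_iff₀ (by positivity)]
        nlinarith

end Convolution

theorem AP.exists_bound {f : ℝ → ℂ} (hf : AP f) : ∃ C : ℝ, ∀ t, ‖f t‖ ≤ C := by
  by_contra! hunbdd
  choose b hb using fun n : ℕ => hunbdd n
  obtain ⟨φ, hφ, g, hg⟩ := hf.2 b
  have hbounded : Tendsto (fun m => ‖f (0 + b (φ m))‖) atTop (𝓝 ‖g 0‖) :=
    (hg.tendsto_at 0).norm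
  have hunbounded : Tendsto (fun m => ‖f (0 + b (φ m))‖) atTop atTop := by
    refine tendsto_atTop_mono (fun m => ?_) tendsto_natCast_atTop_atTop
    rw [zero_add]
    exact (Nat.cast_le.mpr (hφ.id_le m)).trans (hb (φ m)).le
  exact not_tendsto_atTop_of_tendsto_nhds hbounded hunbounded

theorem AP.convolution_mul_left {k f : ℝ → ℂ} (hk : Integrable k) (hf : AP f) :
    AP (k ⋆[mul ℂ ℂ] f) := by
  obtain ⟨C, hC⟩ := hf.exists_bound
  have hbdd : BddAbove (Set.range fun t => ‖f t‖) := ⟨C, Set.forall_mem_range.mpr hC⟩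
  refine ⟨hbdd.continuous_convolution_right_of_integrable _ hk hf.1, fun b => ?_⟩
  obtain ⟨φ, hφ, g, hg⟩ := hf.2 b
  refine ⟨φ, hφ, k ⋆[mul ℂ ℂ] g, ?_⟩
  simp_rw [convolution_mul_apply_add]
  exact hg.convolution_mul_left hk
    (fun _ => (hf.1.comp (continuous_add_const _)).aestronglyMeasurable) (fun _ _ => hC _)

theorem integrable_exp_neg_mul_abs {a : ℝ} (ha : 0 < a) :
    Integrable fun x : ℝ => Real.exp (-a * |x|) := by
  -- `integral_comp_abs` needs no integrability; the value `2 / a ≠ 0` certifies it.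
  refine Integrable.of_integral_ne_zero ?_
  rw [integral_comp_abs (f := fun x => Real.exp (-a * x)), integral_exp_mul_Ioi (by linarith)]
  simp [ha.ne']

theorem norm_gker_le (ω : ℂ) (u : ℝ) : ‖gker ω u 0‖ ≤ Real.exp (-|ω.re| * |u|) := by
  rcases lt_trichotomy ω.re 0 with hr | hr | hr
  · by_cases hu : 0 < u
    · simp [gker, Real.sign_of_neg hr, hu, Complex.norm_exp, abs_of_neg hr, abs_of_pos hu]
    · simp [gker, Real.sign_of_neg hr, hu]; positivity
  · simp [gker, hr]
  · by_cases hu : u < 0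
    · simp [gker, Real.sign_of_pos hr, hu, Complex.norm_exp, abs_of_pos hr, abs_of_neg hu]
    · simp [gker, Real.sign_of_pos hr, hu]; positivity

theorem measurable_gker (ω : ℂ) : Measurable fun u => gker ω u 0 := by
  unfold gker
  exact Measurable.ite (measurableSet_lt (by fun_prop) measurable_const) (by fun_prop)
    measurable_const

theorem integrable_gker {ω : ℂ} (hω : ω.re ≠ 0) : Integrable fun u => gker ω u 0 :=
  (integrable_exp_neg_mul_abs (abs_pos.mpr hω)).mono' (measurable_gker ω).aestronglyMeasurable
    (Eventually.of_forall (norm_gker_le ω))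

theorem Gop_eq_convolution (ω : ℂ) (f : ℝ → ℂ) :
    Gop ω f = (fun u => gker ω u 0) ⋆[mul ℂ ℂ] f := by
  ext t
  simp only [Gop, convolution_mul_swap, gker, sub_zero]

/-- `G_ω` preserves almost periodicity. -/
theorem stmt3 (ω : ℂ) (hω : ω.re ≠ 0) (f : ℝ → ℂ) (hf : AP f) : AP (Gop ω f) := by
  rw [Gop_eq_convolution]
  exact hf.convolution_mul_left (integrable_gker hω)
end
end

section
/- Let n ≥ 2, let γ_1, …, γ_{n−1} ∈ ℂ be pairwise distinct with Re γ_j ≠ 0 for all j, and let f : ℝ → ℂ be bounded and continuous. Then G[f] is (n−1)-times differentiable and satisfies G[f]^{(i)}(t) = ∑_{j=1}^{n−1} (γ_j^i/Γ_j) G_{γ_j}[f](t) for every 0 ≤ i ≤ n−2 and every t ∈ ℝ, and G[f]^{(n−1)}(t) = ∑_{j=1}^{n−1} (γ_j^{n−1}/Γ_j) G_{γ_j}[f](t) + f(t). Consequently D(G[f]) = f on ℝ, where D is the constant-coefficient linear differential operator of order n−1 whose characteristic polynomial is ∏_{j=1}^{n−1}(x − γ_j). -/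
/-! For `Re ω < 0` one has `G_ω[f](t) = e^{ωt} ∫_{-∞}^t e^{-ωs} f(s) ds`, hence
`G_ω[f]' = ω G_ω[f] + f`; the case `Re ω > 0` reduces to this one through the reflection
`G_ω[f](t) = -G_{-ω}[f(-·)](-t)`. Differentiating `G[f] = ∑ Γ_j⁻¹ G_{γ_j}[f]` repeatedly, the
`i`-th derivative picks up the extra term `(∑_j γ_j^{i-1} / Γ_j) f`. That sum is the coefficient of
`x^{n-2}` in the Lagrange interpolant of `x^{i-1}` at the nodes `γ_j`, so it is `0` for `i < n-1`
and `1` for `i = n-1`. Applying `D` then leaves `∑_j P(γ_j) / Γ_j G_{γ_j}[f] + f = f`, as the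
characteristic polynomial `P` vanishes at every `γ_j`. -/

open MeasureTheory Filter Topology
open scoped ENNReal NNReal

noncomputable section

theorem hasDerivAt_setIntegral_Iic {E : Type*} [NormedAddCommGroup E] [NormedSpace ℝ E]
    [CompleteSpace E] {g : ℝ → E} (hg : Continuous g) (hint : ∀ a, IntegrableOn g (Set.Iic a))
    (t : ℝ) : HasDerivAt (fun u => ∫ s in Set.Iic u, g s) (g t) t := by
  have hsplit : (fun u => ∫ s in Set.Iic u, g s) =
      fun u => (∫ s in Set.Iic t, g s) + ∫ s in t..u, g s := by
    funext u
    rw [← intervalIntegral.integral_Iic_sub_Iic (hint t) (hint u), add_sub_cancel]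
  rw [hsplit]
  exact (intervalIntegral.integral_hasDerivAt_right (hg.intervalIntegrable t t)
    (hg.stronglyMeasurableAtFilter volume (𝓝 t)) hg.continuousAt).const_add _

theorem BCb.comp_neg {f : ℝ → ℂ} (hf : BCb f) : BCb fun s => f (-s) :=
  ⟨hf.1.comp continuous_neg, hf.2.imp fun _ hC s => hC (-s)⟩

theorem BCb.integrableOn_exp_mul_Iic {ω : ℂ} (hω : ω.re < 0) {f : ℝ → ℂ} (hf : BCb f)
    (a : ℝ) : IntegrableOn (fun s : ℝ => Complex.exp (-ω * s) * f s) (Set.Iic a) := by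
  obtain ⟨hfc, C, hC⟩ := hf
  exact (integrableOn_exp_mul_complex_Iic (a := -ω) (by simpa using hω) a).mul_bdd
    hfc.aestronglyMeasurable (ae_of_all _ hC)

theorem gker_of_re_neg {ω : ℂ} (hω : ω.re < 0) (t s : ℝ) :
    gker ω t s = (Set.Iio t).indicator (fun s => Complex.exp (ω * (t - s : ℝ))) s := by
  simp only [gker, Real.sign_of_neg hω, Set.indicator_apply, Set.mem_Iio]
  split_ifs <;> first | rfl | (exfalso; linarith) | (push_cast; ring)

theorem gker_neg (ω : ℂ) (t s : ℝ) : gker (-ω) (-t) (-s) = -gker ω t s := by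
  have hcond : -ω.re.sign * (-t - -s) = ω.re.sign * (t - s) := by ring
  simp only [gker, Complex.neg_re, Real.sign_neg, hcond]
  split_ifs
  · push_cast
    ring_nf
  · simp

theorem Gop_eq_of_re_neg {ω : ℂ} (hω : ω.re < 0) (f : ℝ → ℂ) (t : ℝ) :
    Gop ω f t = Complex.exp (ω * t) * ∫ s in Set.Iic t, Complex.exp (-ω * s) * f s := by
  simp_rw [Gop, gker_of_re_neg hω, ← Set.indicator_mul_left]
  rw [integral_indicator measurableSet_Iio, ← integral_Iic_eq_integral_Iio,
    ← integral_const_mul]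
  refine setIntegral_congr_fun measurableSet_Iic fun s _ => ?_
  rw [← mul_assoc, ← Complex.exp_add]
  push_cast
  ring_nf

theorem Gop_eq_neg_Gop_neg (ω : ℂ) (f : ℝ → ℂ) (t : ℝ) :
    Gop ω f t = -Gop (-ω) (fun s => f (-s)) (-t) := by
  have hrefl : ∫ s, gker (-ω) (-t) s * f (-s) = ∫ s, -(gker ω t s * f s) := by
    rw [← integral_neg_eq_self]
    simp only [gker_neg, neg_neg, neg_mul]
  rw [Gop, Gop, hrefl, integral_neg, neg_neg]

theorem hasDerivAt_Gop_of_re_neg {ω : ℂ} (hω : ω.re < 0) {f : ℝ → ℂ} (hf : BCb f) (t : ℝ) :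
    HasDerivAt (Gop ω f) (ω * Gop ω f t + f t) t := by
  have hexp : HasDerivAt (fun u : ℝ => Complex.exp (ω * u)) (Complex.exp (ω * t) * ω) t := by
    simpa using ((hasDerivAt_id t).ofReal_comp.const_mul ω).cexp
  have hint := hasDerivAt_setIntegral_Iic (by have := hf.1; fun_prop)
    (hf.integrableOn_exp_mul_Iic hω) t
  rw [Gop_eq_of_re_neg hω f t, funext (Gop_eq_of_re_neg hω f)]
  refine (hexp.mul hint).congr_deriv ?_
  rw [← mul_assoc, ← Complex.exp_add, neg_mul, add_neg_cancel, Complex.exp_zero]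
  ring

theorem hasDerivAt_Gop {ω : ℂ} (hω : ω.re ≠ 0) {f : ℝ → ℂ} (hf : BCb f) (t : ℝ) :
    HasDerivAt (Gop ω f) (ω * Gop ω f t + f t) t := by
  rcases hω.lt_or_gt with hneg | hpos
  · exact hasDerivAt_Gop_of_re_neg hneg hf t
  have hrefl := (hasDerivAt_Gop_of_re_neg (ω := -ω) (by simpa using hpos) hf.comp_neg (-t)).scomp
    t (hasDerivAt_neg t)
  rw [Gop_eq_neg_Gop_neg ω f t, funext (Gop_eq_neg_Gop_neg ω f)]
  refine hrefl.neg.congr_deriv ?_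
  simp only [neg_neg, neg_smul, one_smul]
  ring

theorem coeff_basis_eq_inv_Gam {m : ℕ} (γ : Fin m → ℂ) (j : Fin m) :
    (Lagrange.basis Finset.univ γ j).coeff (m - 1) = (Gam γ j)⁻¹ := by
  have hdeg : (∏ k ∈ Finset.univ.erase j, (Polynomial.X - Polynomial.C (γ k))).natDegree =
      m - 1 := by
    simp [Finset.card_erase_of_mem]
  rw [Lagrange.basis, Finset.prod_congr rfl fun k _ => Lagrange.basisDivisor.eq_def _ _,
    Finset.prod_mul_distrib, ← map_prod, Polynomial.coeff_C_mul, ← hdeg,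
    (Polynomial.monic_prod_X_sub_C _ _).coeff_natDegree, mul_one, Gam,
    ← Finset.prod_inv_distrib]

theorem sum_pow_div_Gam {m : ℕ} {γ : Fin m → ℂ} (hinj : Function.Injective γ) {i : ℕ}
    (hi : i < m) : ∑ j, γ j ^ i / Gam γ j = if i + 1 = m then 1 else 0 := by
  have hdeg : (Polynomial.X ^ i : Polynomial ℂ).degree < (Finset.univ : Finset (Fin m)).card := by
    rw [Polynomial.degree_X_pow, Finset.card_univ, Fintype.card_fin]
    exact_mod_cast hi
  have hcoeff := congrArg (Polynomial.coeff · (m - 1))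
    (Lagrange.eq_interpolate (v := γ) hinj.injOn hdeg)
  simp only [Lagrange.interpolate_apply, Polynomial.finsetSum_coeff, Polynomial.coeff_C_mul,
    Polynomial.eval_pow, Polynomial.eval_X, Polynomial.coeff_X_pow, coeff_basis_eq_inv_Gam]
    at hcoeff
  simp only [div_eq_mul_inv, ← hcoeff]
  split_ifs <;> first | rfl | omega

section GreenOp

variable {m : ℕ} {γ : Fin m → ℂ} {f : ℝ → ℂ}

theorem hasDerivAt_sum_pow_div_Gam_mul_Gop (hre : ∀ j, (γ j).re ≠ 0) (hf : BCb f) (i : ℕ)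
    (t : ℝ) :
    HasDerivAt (fun t => ∑ j, γ j ^ i / Gam γ j * Gop (γ j) f t)
      ((∑ j, γ j ^ (i + 1) / Gam γ j * Gop (γ j) f t) + (∑ j, γ j ^ i / Gam γ j) * f t) t := by
  refine (HasDerivAt.fun_sum fun j _ => (hasDerivAt_Gop (hre j) hf t).const_mul _).congr_deriv ?_
  simp only [mul_add, Finset.sum_add_distrib, Finset.sum_mul]
  congr 1
  exact Finset.sum_congr rfl fun j _ => by ring

theorem iteratedDeriv_GreenOp (hm : 1 ≤ m) (hinj : Function.Injective γ)
    (hre : ∀ j, (γ j).re ≠ 0) (hf : BCb f) {i : ℕ} (hi : i ≤ m) :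
    iteratedDeriv i (GreenOp γ f) =
      fun t => (∑ j, γ j ^ i / Gam γ j * Gop (γ j) f t) + if i = m then f t else 0 := by
  induction i with
  | zero =>
    funext t
    simp [GreenOp, if_neg (by omega : 0 ≠ m)]
  | succ i ih =>
    rw [iteratedDeriv_succ, ih (by omega)]
    funext t
    simp only [if_neg (by omega : i ≠ m), add_zero]
    rw [(hasDerivAt_sum_pow_div_Gam_mul_Gop hre hf i t).deriv, sum_pow_div_Gam hinj (by omega)]
    split_ifs <;> simp

theorem Dop_eq_of_iteratedDeriv_eq (z : ℝ → ℂ) (a : Fin m → ℂ) (b : ℂ) (t : ℝ)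
    (hz : ∀ k ≤ m, iteratedDeriv k z t = ∑ j, γ j ^ k * a j + if k = m then b else 0) :
    Dop γ z t = b := by
  have hdeg : (Dpoly γ).natDegree = m := by simp [Dpoly]
  have hlead : (Dpoly γ).coeff m = 1 := by
    have hmonic : (Dpoly γ).Monic := Polynomial.monic_prod_X_sub_C _ _
    rw [← hmonic.coeff_natDegree, hdeg]
  have hroot (j : Fin m) : (Dpoly γ).eval (γ j) = 0 := by
    rw [Dpoly, Polynomial.eval_prod]
    exact Finset.prod_eq_zero (Finset.mem_univ j) (by simp)
  calc Dop γ z t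
      = ∑ j, (∑ k ∈ Finset.range (m + 1), (Dpoly γ).coeff k * γ j ^ k) * a j
          + (Dpoly γ).coeff m * b := by
        rw [Dop, Finset.sum_congr rfl fun k hk => by
          rw [hz k (Nat.lt_succ_iff.mp (Finset.mem_range.mp hk))]]
        simp only [mul_add, Finset.sum_add_distrib, Finset.mul_sum, Finset.sum_mul, mul_ite,
          mul_zero, Finset.sum_ite_eq', Finset.mem_range, Nat.lt_succ_self, if_true]
        rw [Finset.sum_comm]
        simp only [mul_assoc]
    _ = b := by
        simp only [← Polynomial.eval_eq_sum_range' (by omega : (Dpoly γ).natDegree < m + 1),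
          hroot, zero_mul, Finset.sum_const_zero, zero_add, hlead, one_mul]

end GreenOp

/-- Derivatives of the Green operator `G[f]` for bounded continuous `f`,
and the identity `D(G[f]) = f`. -/
theorem stmt9 (n : ℕ) (hn : 2 ≤ n) (γ : Fin (n-1) → ℂ)
    (hinj : Function.Injective γ) (hre : ∀ j, (γ j).re ≠ 0)
    (f : ℝ → ℂ) (hf : BCb f) :
    (∀ i, i < n - 1 → Differentiable ℝ (iteratedDeriv i (GreenOp γ f))) ∧
    (∀ i, i + 2 ≤ n → ∀ t,
      iteratedDeriv i (GreenOp γ f) t = ∑ j, γ j ^ i / Gam γ j * Gop (γ j) f t) ∧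
    (∀ t, iteratedDeriv (n-1) (GreenOp γ f) t =
      (∑ j, γ j ^ (n-1) / Gam γ j * Gop (γ j) f t) + f t) ∧
    (∀ t, Dop γ (GreenOp γ f) t = f t) := by
  have hderiv {i : ℕ} (hi : i ≤ n - 1) := iteratedDeriv_GreenOp (by omega) hinj hre hf hi
  refine ⟨fun i hi t => ?_, fun i hi t => ?_, fun t => ?_, fun t => ?_⟩
  · rw [hderiv hi.le]
    simpa [hi.ne] using (hasDerivAt_sum_pow_div_Gam_mul_Gop hre hf i t).differentiableAt
  · simp [hderiv (i := i) (by omega), show i ≠ n - 1 by omega]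
  · simp [hderiv le_rfl]
  · refine Dop_eq_of_iteratedDeriv_eq _ (fun j => (Gam γ j)⁻¹ * Gop (γ j) f t) _ t fun k hk => ?_
    simp [hderiv hk, div_eq_mul_inv, mul_assoc]

end
end
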